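/- Let q'(x) be a tree-like CQ and h a homomorphism from q' to a CQ q(x). For every node w of the query graph of q', let P_w denote the image under h of the unique path in q' from the root x to w. If A = R(t,t') is an atom of q' with t the parent of t' in the tree, and A' = R(h(t),h(t')), then exactly one of the following holds: (i) valid(P_{t'}) = valid(P_t), A', end(P_{t'}), i.e., valid(P_{t'}) extends valid(P_t) by the atom A' (this happens when A' differs from the last atom of valid(P_t)); or (ii) valid(P_t) = valid(P_{t'}), A', end(P_t), i.e., valid(P_t) extends valid(P_{t'}) by the atom A' (this happens when A' coincides with the last atom of valid(P_t)). -/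

import Mathlib

/-!
Formalization of conjunctive queries (CQs) over knowledge graphs, homomorphisms,
paths, valid paths, unravelings, query graphs and tree-likeness, following the
paper "Approximate Answering of Graph Queries" setting.
-/

namespace KGQuery

/-- Constants: a countably infinite set. -/
abbrev Con : Type := ℕ

/-- Variables: a countably infinite set (disjoint from the constants via `Term`). -/
abbrev Var : Type := ℕ

/-- Terms are variables or constants. -/
inductive Term : Type
  | var : Var → Term
  | con : Con → Term
deriving DecidableEq

/-- An atom `R(y, z)` with `y, z` terms. -/
structure Atom (Rel : Type) : Type where
  rel : Rel
  src : Term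
  tgt : Term
deriving DecidableEq

/-- A fact `R(a, b)` with `a, b` constants. -/
structure Fact (Rel : Type) : Type where
  rel : Rel
  src : Con
  tgt : Con
deriving DecidableEq

/-- A knowledge graph: a finite set of facts. -/
abbrev KG (Rel : Type) : Type := Finset (Fact Rel)

/-- A (unary) conjunctive query: a finite nonempty set of atoms in which the
target variable occurs. -/
structure CQ (Rel : Type) : Type where
  target : Var
  atoms : Finset (Atom Rel)
  atoms_nonempty : atoms.Nonempty
  target_occurs : ∃ A ∈ atoms, A.src = Term.var target ∨ A.tgt = Term.var target

variable {Rel : Type}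

/-- The terms occurring in the atoms of a CQ. -/
def CQ.terms (q : CQ Rel) : Set Term :=
  {t | ∃ A ∈ q.atoms, A.src = t ∨ A.tgt = t}

/-- `Var(q)`: the variables occurring in `q`. -/
def CQ.vars (q : CQ Rel) : Set Var := {v | Term.var v ∈ q.terms}

/-- `Con(q)`: the constants occurring in `q`. -/
def CQ.cons (q : CQ Rel) : Set Con := {c | Term.con c ∈ q.terms}

/-- The answer `q(G)` of a CQ `q` over a knowledge graph `G`: the set of constants
`a` such that some assignment `μ` fixing the constants of `q` maps the target
variable to `a` and every atom of `q` to a fact of `G`. -/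
def CQ.answer (q : CQ Rel) (G : KG Rel) : Set Con :=
  {a | ∃ μ : Term → Con,
    (∀ c ∈ q.cons, μ (Term.con c) = c) ∧
    μ (Term.var q.target) = a ∧
    ∀ A ∈ q.atoms, (⟨A.rel, μ A.src, μ A.tgt⟩ : Fact Rel) ∈ G}

/-- Containment `q ⊆ q'`: the answers of `q` are contained in those of `q'`
over every knowledge graph. -/
def CQ.contained (q q' : CQ Rel) : Prop :=
  ∀ G : KG Rel, q.answer G ⊆ q'.answer G

/-- A homomorphism from `q` to `q'`: maps the target variable of `q` to the target
variable of `q'`, fixes the constants of `q`, and maps every atom of `q` to an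
atom of `q'`. -/
def IsHom (q q' : CQ Rel) (h : Term → Term) : Prop :=
  h (Term.var q.target) = Term.var q'.target ∧
  (∀ c ∈ q.cons, h (Term.con c) = Term.con c) ∧
  ∀ A ∈ q.atoms, (⟨A.rel, h A.src, h A.tgt⟩ : Atom Rel) ∈ q'.atoms

/-! ### The canonical database -/

/-- Replace variables by constants using `ι`. -/
def termToCon (ι : Var → Con) : Term → Con
  | Term.var v => ι v
  | Term.con c => c

/-- The canonical database of `q`: the knowledge graph obtained from the atoms of
`q` by replacing each variable `v` by the constant `ι v`. -/
def canonicalDB [DecidableEq Rel] (q : CQ Rel) (ι : Var → Con) : KG Rel :=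
  q.atoms.image (fun A => ⟨A.rel, termToCon ι A.src, termToCon ι A.tgt⟩)

/-! ### Paths and valid paths -/

/-- The atom `A` is traversed from `u` to `v`: forward (`A = R(u,v)`) or
backward (`A = R(v,u)`). -/
def Traverses (A : Atom Rel) (u v : Term) : Prop :=
  (A.src = u ∧ A.tgt = v) ∨ (A.src = v ∧ A.tgt = u)

/-- A path starting at the term `u`, encoded as its list of steps `(Aᵢ, xᵢ)`:
each atom `Aᵢ` belongs to `q` and is traversed from `xᵢ₋₁` to `xᵢ`. -/
def IsPathFrom (q : CQ Rel) : Term → List (Atom Rel × Term) → Prop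
  | _, [] => True
  | u, (A, v) :: rest => A ∈ q.atoms ∧ Traverses A u v ∧ IsPathFrom q v rest

/-- A path of `q(x)`: a path starting at the target variable `x`.
The path `x₀, A₁, x₁, …, A_k, x_k` is encoded as the list `[(A₁,x₁),…,(A_k,x_k)]`,
whose length `k` is the length of the path. -/
def IsPath (q : CQ Rel) (P : List (Atom Rel × Term)) : Prop :=
  IsPathFrom q (Term.var q.target) P

/-- The end of a path (the target variable for the path of length `0`). -/
def pathEnd (q : CQ Rel) (P : List (Atom Rel × Term)) : Term :=
  match P.getLast? with
  | none => Term.var q.target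
  | some s => s.2

/-- Validity: no two consecutive steps traverse the same atom. -/
def IsValid (P : List (Atom Rel × Term)) : Prop :=
  (P.map Prod.fst).Chain' (· ≠ ·)

/-- A valid path of `q`. -/
def IsValidPath (q : CQ Rel) (P : List (Atom Rel × Term)) : Prop :=
  IsPath q P ∧ IsValid P

/-- A path is unanchored if it ends at a variable (anchored if it ends at a
constant). -/
def Unanchored (q : CQ Rel) (P : List (Atom Rel × Term)) : Prop :=
  ∃ v : Var, pathEnd q P = Term.var v

/-! ### Unravelings -/

/-- The term `o_P` of the unraveling associated to a valid path `P`: the fresh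
variable `z_P = enc P` if `P` is unanchored, and the constant `end(P)` otherwise. -/
def oTerm (q : CQ Rel) (enc : List (Atom Rel × Term) → Var)
    (P : List (Atom Rel × Term)) : Term :=
  match pathEnd q P with
  | Term.var _ => Term.var (enc P)
  | Term.con c => Term.con c

/-- The set of atoms of the unraveling `q̃_d` of `q`: for every valid path
`P' = P, A', end(P')` of length at most `d`, the atom `R(o_P, o_{P'})` if
`A' = R(end(P), end(P'))`, and the atom `R(o_{P'}, o_P)` if
`A' = R(end(P'), end(P))`. -/
def UnravelAtoms (q : CQ Rel) (enc : List (Atom Rel × Term) → Var) (d : ℕ) :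
    Set (Atom Rel) :=
  {B | ∃ (P : List (Atom Rel × Term)) (A' : Atom Rel) (t' : Term),
    IsValidPath q (P ++ [(A', t')]) ∧ P.length + 1 ≤ d ∧
    ((A'.src = pathEnd q P ∧ A'.tgt = t' ∧
        B = ⟨A'.rel, oTerm q enc P, oTerm q enc (P ++ [(A', t')])⟩) ∨
     (A'.src = t' ∧ A'.tgt = pathEnd q P ∧
        B = ⟨A'.rel, oTerm q enc (P ++ [(A', t')]), oTerm q enc P⟩))}

/-- `qd` is (a presentation of) the unraveling `q̃_d` of `q`, where the injective
map `enc` provides the distinct fresh variables `z_P` indexing the unanchored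
valid paths: its target variable is `z_{P₀} = enc []` and its atoms are exactly
the unraveling atoms. -/
def IsUnraveling (q : CQ Rel) (enc : List (Atom Rel × Term) → Var) (d : ℕ)
    (qd : CQ Rel) : Prop :=
  Function.Injective enc ∧ qd.target = enc [] ∧
    (↑qd.atoms : Set (Atom Rel)) = UnravelAtoms q enc d

/-! ### Query graphs and tree-likeness -/

/-- Nodes of the query graph of a CQ: either a variable, or an occurrence of a
constant in an atom (`false` = source position, `true` = target position). -/
abbrev QNode (Rel : Type) : Type := Var ⊕ (Atom Rel × Bool)

/-- The term at position `b` of an atom. -/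
def Atom.pos (A : Atom Rel) (b : Bool) : Term := cond b A.tgt A.src

/-- The node of the query graph corresponding to position `b` of atom `A`:
the variable itself, or the occurrence node for a constant. -/
def endpointNode (A : Atom Rel) (b : Bool) : QNode Rel :=
  match A.pos b with
  | Term.var v => Sum.inl v
  | Term.con _ => Sum.inr (A, b)

/-- The node set of the query graph of `q`: the variables of `q` together with
one node per occurrence of a constant in an atom of `q`. -/
def nodeSet (q : CQ Rel) : Set (QNode Rel) :=
  (Sum.inl '' q.vars) ∪
    {n | ∃ A ∈ q.atoms, ∃ b : Bool, (∃ c : Con, A.pos b = Term.con c) ∧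
      n = Sum.inr (A, b)}

/-- Adjacency in the query graph of `q`: one (undirected) edge per atom. -/
def Adj (q : CQ Rel) (m n : QNode Rel) : Prop :=
  ∃ A ∈ q.atoms,
    (m = endpointNode A false ∧ n = endpointNode A true) ∨
    (m = endpointNode A true ∧ n = endpointNode A false)

/-- The root of the query graph of a CQ: its target variable. -/
def rootNode (q : CQ Rel) : QNode Rel := Sum.inl q.target

/-- `q` is tree-like: its query graph is a tree rooted at the target variable,
i.e. every node is connected to the root and the number of edges (= atoms) is one
less than the number of nodes. -/
def IsTreeLike (q : CQ Rel) : Prop :=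
  (∀ n ∈ nodeSet q, Relation.ReflTransGen (Adj q) (rootNode q) n) ∧
  (nodeSet q).ncard = q.atoms.card + 1

/-- Reachability in at most `d` steps of a relation. -/
def ReachIn {α : Type*} (r : α → α → Prop) : ℕ → α → α → Prop
  | 0, a, b => a = b
  | n + 1, a, b => a = b ∨ ∃ c, r a c ∧ ReachIn r n c b

/-- The (rooted) query graph of `q` has depth at most `d`: every node is within
distance `d` of the root. -/
def HasDepthLE (q : CQ Rel) (d : ℕ) : Prop :=
  ∀ n ∈ nodeSet q, ReachIn (Adj q) d (rootNode q) n

/-- The depth of (the query graph of) a tree-like CQ: the length of the longest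
path from the root to a node. -/
noncomputable def depth (q : CQ Rel) : ℕ := sInf {d : ℕ | HasDepthLE q d}

/-! ### Reduction of paths to valid paths -/

/-- One step of reduction: replace a subsequence `y, A, z, A, y` by `y`. -/
def PathReduce (q : CQ Rel) (P Q : List (Atom Rel × Term)) : Prop :=
  ∃ (L1 : List (Atom Rel × Term)) (A : Atom Rel) (z y : Term)
    (L2 : List (Atom Rel × Term)),
    pathEnd q L1 = y ∧ P = L1 ++ (A, z) :: (A, y) :: L2 ∧ Q = L1 ++ L2

/-- Append one step to an already valid path, cancelling a backtracking step. -/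
def validAppend [DecidableEq Rel] (P : List (Atom Rel × Term))
    (s : Atom Rel × Term) : List (Atom Rel × Term) :=
  match P.getLast? with
  | none => [s]
  | some t => if t.1 = s.1 then P.dropLast else P ++ [s]

/-- `valid(P)`: the unique valid path obtained from the path `P` by iteratively
replacing subsequences of the form `y, A, z, A, y` by `y`. -/
def validify [DecidableEq Rel] (P : List (Atom Rel × Term)) :
    List (Atom Rel × Term) :=
  P.foldl validAppend []

/-- The image of an atom under a map on terms. -/
def Atom.mapTerms (h : Term → Term) (A : Atom Rel) : Atom Rel :=
  ⟨A.rel, h A.src, h A.tgt⟩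

/-- The image under `h` of a path: apply `h` to every element and every atom. -/
def mapPath (h : Term → Term) (P : List (Atom Rel × Term)) :
    List (Atom Rel × Term) :=
  P.map (fun s => (s.1.mapTerms h, h s.2))

end KGQuery

/-! `valid` is a left fold, so `valid(P_{t'})` is `valid(P_t)` with `A'` appended, or with its
last step cancelled when that step traverses `A'`. In the cancelling case the removed step ends
at `end(valid(P_t)) = end(P_t) = h(t)`, since cancelling a backtrack never moves the end of a
path. -/

namespace KGQuery

variable {Rel : Type}

def endFrom : Term → List (Atom Rel × Term) → Term
  | u, [] => u
  | _, (_, v) :: rest => endFrom v rest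

lemma endFrom_append (u : Term) (L M : List (Atom Rel × Term)) :
    endFrom u (L ++ M) = endFrom (endFrom u L) M := by
  induction L generalizing u with
  | nil => rfl
  | cons s rest ih => exact ih s.2

@[simp]
lemma endFrom_concat (u : Term) (L : List (Atom Rel × Term)) (s : Atom Rel × Term) :
    endFrom u (L ++ [s]) = s.2 := by
  rw [endFrom_append]; rfl

lemma pathEnd_eq_endFrom (q : CQ Rel) (P : List (Atom Rel × Term)) :
    pathEnd q P = endFrom (Term.var q.target) P := by
  rcases P.eq_nil_or_concat' with rfl | ⟨L, s, rfl⟩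
  · rfl
  · simp [pathEnd]

@[simp]
lemma pathEnd_concat (q : CQ Rel) (L : List (Atom Rel × Term)) (s : Atom Rel × Term) :
    pathEnd q (L ++ [s]) = s.2 := by
  simp [pathEnd]

lemma isPathFrom_append {q : CQ Rel} {u : Term} {L M : List (Atom Rel × Term)} :
    IsPathFrom q u (L ++ M) ↔ IsPathFrom q u L ∧ IsPathFrom q (endFrom u L) M := by
  induction L generalizing u with
  | nil => simp [IsPathFrom, endFrom]
  | cons s rest ih =>
    simp only [List.cons_append, IsPathFrom, endFrom, ih, and_assoc]

lemma isPath_concat {q : CQ Rel} {L : List (Atom Rel × Term)} {A : Atom Rel} {y : Term} :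
    IsPath q (L ++ [(A, y)]) ↔ IsPath q L ∧ A ∈ q.atoms ∧ Traverses A (pathEnd q L) y := by
  simp [IsPath, isPathFrom_append, IsPathFrom, pathEnd_eq_endFrom]

lemma Traverses.eq_of_traverses {A : Atom Rel} {x y z : Term}
    (h₁ : Traverses A x z) (h₂ : Traverses A z y) : y = x := by
  rcases h₁ with ⟨e₁, e₂⟩ | ⟨e₁, e₂⟩ <;> rcases h₂ with ⟨f₁, f₂⟩ | ⟨f₁, f₂⟩ <;> simp_all

lemma IsPathFrom.mapPath {q q' : CQ Rel} {h : Term → Term} (hh : IsHom q' q h) :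
    ∀ {u : Term} {P : List (Atom Rel × Term)}, IsPathFrom q' u P →
      IsPathFrom q (h u) (mapPath h P)
  | _, [], _ => trivial
  | _, (_, _) :: _, ⟨hA, hAuv, hrest⟩ =>
    ⟨hh.2.2 _ hA, by rcases hAuv with ⟨rfl, rfl⟩ | ⟨rfl, rfl⟩ <;> simp [Traverses, Atom.mapTerms],
      hrest.mapPath hh⟩

lemma IsPath.mapPath {q q' : CQ Rel} {h : Term → Term} (hh : IsHom q' q h)
    {P : List (Atom Rel × Term)} (hP : IsPath q' P) : IsPath q (mapPath h P) := by
  have := IsPathFrom.mapPath hh hP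
  rwa [hh.1] at this

lemma pathEnd_mapPath {q q' : CQ Rel} {h : Term → Term} (hh : IsHom q' q h)
    (P : List (Atom Rel × Term)) : pathEnd q (mapPath h P) = h (pathEnd q' P) := by
  rcases P.eq_nil_or_concat' with rfl | ⟨L, s, rfl⟩
  · exact hh.1.symm
  · simp [mapPath]

section validify

variable [DecidableEq Rel]

@[simp]
lemma validAppend_nil (s : Atom Rel × Term) : validAppend [] s = [s] := rfl

lemma validAppend_concat (L : List (Atom Rel × Term)) (b s : Atom Rel × Term) :
    validAppend (L ++ [b]) s = if b.1 = s.1 then L else L ++ [b, s] := by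
  simp [validAppend]

lemma validify_concat (L : List (Atom Rel × Term)) (s : Atom Rel × Term) :
    validify (L ++ [s]) = validAppend (validify L) s := by
  simp [validify, List.foldl_append]

lemma IsPath.validAppend {q : CQ Rel} {V : List (Atom Rel × Term)} {A : Atom Rel} {y : Term}
    (hV : IsPath q V) (hA : A ∈ q.atoms) (hAy : Traverses A (pathEnd q V) y) :
    IsPath q (validAppend V (A, y)) ∧ pathEnd q (validAppend V (A, y)) = y := by
  rcases V.eq_nil_or_concat' with rfl | ⟨L, ⟨B, z⟩, rfl⟩
  · exact ⟨isPath_concat (L := []).2 ⟨trivial, hA, hAy⟩, rfl⟩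
  rw [validAppend_concat]
  split_ifs with hBA
  · obtain ⟨hL, -, hBz⟩ := isPath_concat.1 hV
    subst hBA
    exact ⟨hL, (hBz.eq_of_traverses (by simpa using hAy)).symm⟩
  · rw [show L ++ [(B, z), (A, y)] = (L ++ [(B, z)]) ++ [(A, y)] by simp]
    exact ⟨isPath_concat.2 ⟨hV, hA, hAy⟩, pathEnd_concat q _ _⟩

lemma IsPath.validify {q : CQ Rel} {P : List (Atom Rel × Term)} (hP : IsPath q P) :
    IsPath q (validify P) ∧ pathEnd q (validify P) = pathEnd q P := by
  induction P using List.reverseRecOn with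
  | nil => exact ⟨trivial, rfl⟩
  | append_singleton P s ih =>
    obtain ⟨A, y⟩ := s
    obtain ⟨hP, hA, hAy⟩ := isPath_concat.1 hP
    obtain ⟨hV, hVend⟩ := ih hP
    rw [validify_concat, pathEnd_concat]
    exact hV.validAppend hA (hVend ▸ hAy)

lemma validAppend_eq_append_iff (V : List (Atom Rel × Term)) (s : Atom Rel × Term) :
    validAppend V s = V ++ [s] ↔ V.getLast?.map Prod.fst ≠ some s.1 := by
  rcases V.eq_nil_or_concat' with rfl | ⟨L, b, rfl⟩
  · simp
  · rw [validAppend_concat]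
    split_ifs with hb <;> simp [hb]

lemma validAppend_xor {q : CQ Rel} {V : List (Atom Rel × Term)} {A : Atom Rel} {y : Term} :
    Xor' (validAppend V (A, y) = V ++ [(A, y)])
      (V = validAppend V (A, y) ++ [(A, pathEnd q V)]) := by
  rcases V.eq_nil_or_concat' with rfl | ⟨L, ⟨B, z⟩, rfl⟩
  · exact Or.inl ⟨rfl, by simp⟩
  · rw [validAppend_concat]
    split_ifs with hBA
    · subst hBA
      exact Or.inr ⟨by simp, by simp⟩
    · exact Or.inl ⟨by simp, by simp⟩

end validify

theorem treepath_valid_extension_cases_general {Rel : Type} [DecidableEq Rel]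
    (q q' : CQ Rel)
    (h : Term → Term) (hh : IsHom q' q h)
    (r : Rel) (t t' : Term)
    (W : List (Atom Rel × Term))
    (hW : IsValidPath q' W) (hWend : pathEnd q' W = t) :
    Xor'
      (validify (mapPath h (W ++ [((⟨r, t, t'⟩ : Atom Rel), t')])) =
        validify (mapPath h W) ++ [((⟨r, h t, h t'⟩ : Atom Rel), h t')])
      (validify (mapPath h W) =
        validify (mapPath h (W ++ [((⟨r, t, t'⟩ : Atom Rel), t')])) ++
          [((⟨r, h t, h t'⟩ : Atom Rel), h t)]) ∧
    ((validify (mapPath h (W ++ [((⟨r, t, t'⟩ : Atom Rel), t')])) =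
        validify (mapPath h W) ++ [((⟨r, h t, h t'⟩ : Atom Rel), h t')]) ↔
      (validify (mapPath h W)).getLast?.map Prod.fst ≠
        some (⟨r, h t, h t'⟩ : Atom Rel)) := by
  have hsplit : validify (mapPath h (W ++ [((⟨r, t, t'⟩ : Atom Rel), t')])) =
      validAppend (validify (mapPath h W)) (⟨r, h t, h t'⟩, h t') := by
    rw [mapPath, List.map_append, List.map_singleton, ← mapPath, validify_concat]
    rfl
  have hend : pathEnd q (validify (mapPath h W)) = h t := by
    rw [((hW.1.mapPath hh).validify).2, pathEnd_mapPath hh, hWend]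
  rw [hsplit]
  refine ⟨?_, validAppend_eq_append_iff _ _⟩
  rw [← hend]
  exact validAppend_xor

/-- Let `q'(x)` be a tree-like CQ and `h` a homomorphism from
`q'` to `q(x)`. For a node `w` of the query graph of `q'`, `P_w` denotes the
image under `h` of the unique path in `q'` from the root `x` to `w` (encoded
below by the hypotheses: `W` is the valid path of `q'` ending at `t`, and
`W, A, t'` is the valid path of `q'` ending at `t'`, expressing that `t` is the
parent of `t'` via the atom `A = R(t,t')`). With `A' = R(h(t),h(t'))`, exactly
one of the following holds:
(i) `valid(P_{t'}) = valid(P_t), A', end(P_{t'})`, which happens exactly when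
`A'` differs from the last atom of `valid(P_t)`; or
(ii) `valid(P_t) = valid(P_{t'}), A', end(P_t)`. -/
theorem treepath_valid_extension_cases {Rel : Type} [Fintype Rel] [DecidableEq Rel]
    (q q' : CQ Rel) (htgt : q'.target = q.target)
    (h : Term → Term) (hh : IsHom q' q h)
    (htree : IsTreeLike q')
    (r : Rel) (t t' : Term)
    (hA : (⟨r, t, t'⟩ : Atom Rel) ∈ q'.atoms)
    (W : List (Atom Rel × Term))
    (hW : IsValidPath q' W) (hWend : pathEnd q' W = t)
    (hW' : IsValidPath q' (W ++ [((⟨r, t, t'⟩ : Atom Rel), t')])) :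
    Xor'
      (validify (mapPath h (W ++ [((⟨r, t, t'⟩ : Atom Rel), t')])) =
        validify (mapPath h W) ++ [((⟨r, h t, h t'⟩ : Atom Rel), h t')])
      (validify (mapPath h W) =
        validify (mapPath h (W ++ [((⟨r, t, t'⟩ : Atom Rel), t')])) ++
          [((⟨r, h t, h t'⟩ : Atom Rel), h t)]) ∧
    ((validify (mapPath h (W ++ [((⟨r, t, t'⟩ : Atom Rel), t')])) =
        validify (mapPath h W) ++ [((⟨r, h t, h t'⟩ : Atom Rel), h t')]) ↔
      (validify (mapPath h W)).getLast?.map Prod.fst ≠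
        some (⟨r, h t, h t'⟩ : Atom Rel)) :=
  treepath_valid_extension_cases_general q q' h hh r t t' W hW hWend
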